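/- There exist a finite group G of order 32 and an inverse-closed subset S ⊆ G with 1 ∉ S and |S| = 5 such that the Cayley graph Cay(G,S) is distance-regular with intersection array {5,4,1,1; 1,1,4,5}. (Since the Armanios-Wells graph is the unique distance-regular graph with this intersection array, on 32 vertices, this says that the Armanios-Wells graph is a Cayley graph; a suitable group is G = (Z₂ × Q₈) ⋊ Z₂, generated by four involutions g₁, g₂, g₃, g₄ whose pairwise commutators [gᵢ,gⱼ] (i ≠ j) all equal one fixed central involution, with connection set S = {g₁, g₂, g₃, g₄, g₁g₂g₃g₄}.) -/

import Mathlib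

/-- The Cayley graph of a group `G` with connection set `S`. When `S` is inverse-closed
and does not contain `1`, distinct `a b` are adjacent iff `a * b⁻¹ ∈ S`. -/
def cayleyGraph {G : Type*} [Group G] (S : Set G) : SimpleGraph G where
  Adj a b := a ≠ b ∧ a * b⁻¹ ∈ S ∧ b * a⁻¹ ∈ S
  symm := ⟨fun a b h => ⟨h.1.symm, h.2.2, h.2.1⟩⟩
  loopless := ⟨fun a h => h.1 rfl⟩

/-- `Γ.IsDRGWith b c` means that `Γ` is a distance-regular graph with intersection array
`{b₀, …, b_{d-1}; c₁, …, c_d}`, where `d` is the diameter of `Γ`. -/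
def SimpleGraph.IsDRGWith {V : Type*} (Γ : SimpleGraph V) (b c : List ℕ) : Prop :=
  Γ.Connected ∧ c.length = b.length ∧
  (∀ x y : V, Γ.dist x y ≤ b.length) ∧
  (∃ x y : V, Γ.dist x y = b.length) ∧
  ∀ (i : ℕ) (x y : V), Γ.dist x y = i →
    (i < b.length → {z : V | Γ.Adj y z ∧ Γ.dist x z = i + 1}.ncard = b.getD i 0) ∧
    (1 ≤ i → {z : V | Γ.Adj y z ∧ Γ.dist x z = i - 1}.ncard = c.getD (i - 1) 0)

/-- Auxiliary predicate: `S` is an inverse-closed connection set of size `5` in a group `G` of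
order `32`, not containing the identity, whose Cayley graph is distance-regular with
intersection array `{5,4,1,1; 1,1,4,5}`. -/
def IsArmaniosWellsConnectionSet (G : Type) [Group G] [Fintype G] (S : Set G) : Prop :=
  Fintype.card G = 32 ∧ (∀ s ∈ S, s⁻¹ ∈ S) ∧ (1 : G) ∉ S ∧ S.ncard = 5 ∧
    (cayleyGraph S).IsDRGWith [5, 4, 1, 1] [1, 1, 4, 5]

/-!
The Armanios-Wells graph is an antipodal double cover of the folded 5-cube, so it is natural to
look for it as a Cayley graph of a central extension of `𝔽₂⁴` by `𝔽₂`. Take the extension whose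
commutator form is `1` on every pair of distinct basis vectors `e₁, …, e₄`, and the connection
set `S = {e₁, e₂, e₃, e₄, e₁e₂e₃e₄}`. Since all five generators are involutions which pairwise
commute up to the central involution `z`, the distance from `1` to `g` is
`0, 1, 3, 4` for `g = 1`, `g ∈ S`, `g ∈ zS`, `g = z` respectively, and `2` otherwise. Being a
Cayley graph, `Cay(G, S)` is vertex-transitive, so the intersection numbers can be read off at
the vertex `1`, by counting for each `g` how many `s ∈ S` move the distance of `s * g` up or down.
-/

namespace SimpleGraph

variable {V : Type*} (Γ : SimpleGraph V) {f : V → ℕ}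

theorem le_add_length_of_forall_adj_le (hf : ∀ y z, Γ.Adj y z → f z ≤ f y + 1) {u v : V}
    (w : Γ.Walk u v) : f v ≤ f u + w.length := by
  induction w with
  | nil => simp
  | cons h _ ih =>
    rw [Walk.length_cons]
    have := hf _ _ h
    omega

theorem exists_walk_length_eq_of_exists_adj_succ_eq {x : V} (hx : f x = 0)
    (hf : ∀ y, y ≠ x → ∃ z, Γ.Adj y z ∧ f z + 1 = f y) (y : V) :
    ∃ w : Γ.Walk y x, w.length = f y := by
  induction hn : f y generalizing y with
  | zero =>
    by_cases hy : y = x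
    · exact hy ▸ ⟨.nil, rfl⟩
    · obtain ⟨z, -, hz⟩ := hf y hy
      omega
  | succ n ih =>
    obtain ⟨z, hyz, hz⟩ := hf y (by rintro rfl; omega)
    obtain ⟨w, hw⟩ := ih z (by omega)
    exact ⟨.cons hyz w, by rw [Walk.length_cons, hw]⟩

theorem dist_eq_of_forall_adj_le_of_exists_adj_succ_eq {x : V} (hx : f x = 0)
    (hle : ∀ y z, Γ.Adj y z → f z ≤ f y + 1)
    (hdesc : ∀ y, y ≠ x → ∃ z, Γ.Adj y z ∧ f z + 1 = f y) (y : V) :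
    Γ.dist x y = f y := by
  obtain ⟨w, hw⟩ := Γ.exists_walk_length_eq_of_exists_adj_succ_eq hx hdesc y
  obtain ⟨p, hp⟩ := w.reverse.reachable.exists_walk_length_eq_dist
  have hlower := Γ.le_add_length_of_forall_adj_le hle p
  have hupper := Γ.dist_le w.reverse
  rw [Walk.length_reverse] at hupper
  omega

end SimpleGraph

section Cayley

variable {G : Type*} [Group G]

theorem cayleyGraph_adj_iff {S : Set G} (hS : ∀ s ∈ S, s⁻¹ ∈ S) (h1 : 1 ∉ S) {y z : G} :
    (cayleyGraph S).Adj y z ↔ ∃ s ∈ S, s * y = z := by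
  refine ⟨fun h => ⟨z * y⁻¹, h.2.2, inv_mul_cancel_right z y⟩, ?_⟩
  rintro ⟨s, hs, rfl⟩
  refine ⟨fun h => h1 ?_, ?_, by rwa [mul_inv_cancel_right]⟩
  · rwa [← mul_eq_right.mp h.symm]
  · rw [mul_inv_rev, mul_inv_cancel_left]
    exact hS s hs

structure IsDistFromOne (S : Set G) (f : G → ℕ) : Prop where
  map_one : f 1 = 0
  le_mul : ∀ g, ∀ s ∈ S, f (s * g) ≤ f g + 1
  exists_mul : ∀ g ≠ 1, ∃ s ∈ S, f (s * g) + 1 = f g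

namespace IsDistFromOne

variable {S : Set G} {f : G → ℕ}

theorem forall_adj_le (hf : IsDistFromOne S f) (hS : ∀ s ∈ S, s⁻¹ ∈ S) (h1 : 1 ∉ S) (x y z : G)
    (hyz : (cayleyGraph S).Adj y z) : f (z * x⁻¹) ≤ f (y * x⁻¹) + 1 := by
  obtain ⟨s, hs, rfl⟩ := (cayleyGraph_adj_iff hS h1).1 hyz
  simpa only [mul_assoc] using hf.le_mul _ s hs

theorem exists_adj_succ_eq (hf : IsDistFromOne S f) (hS : ∀ s ∈ S, s⁻¹ ∈ S) (h1 : 1 ∉ S)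
    (x y : G) (hy : y ≠ x) : ∃ z, (cayleyGraph S).Adj y z ∧ f (z * x⁻¹) + 1 = f (y * x⁻¹) := by
  obtain ⟨s, hs, hs'⟩ := hf.exists_mul (y * x⁻¹) (by rwa [Ne, mul_inv_eq_one])
  exact ⟨s * y, (cayleyGraph_adj_iff hS h1).2 ⟨s, hs, rfl⟩, by simpa only [mul_assoc]⟩

theorem dist_eq (hf : IsDistFromOne S f) (hS : ∀ s ∈ S, s⁻¹ ∈ S) (h1 : 1 ∉ S) (x y : G) :
    (cayleyGraph S).dist x y = f (y * x⁻¹) :=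
  (cayleyGraph S).dist_eq_of_forall_adj_le_of_exists_adj_succ_eq (f := fun y => f (y * x⁻¹))
    (by simpa using hf.map_one) (hf.forall_adj_le hS h1 x) (hf.exists_adj_succ_eq hS h1 x) y

theorem connected (hf : IsDistFromOne S f) (hS : ∀ s ∈ S, s⁻¹ ∈ S) (h1 : 1 ∉ S) :
    (cayleyGraph S).Connected := by
  have hreach (y : G) : (cayleyGraph S).Reachable 1 y := by
    obtain ⟨w, -⟩ := (cayleyGraph S).exists_walk_length_eq_of_exists_adj_succ_eq
      (f := fun y => f (y * 1⁻¹)) (by simpa using hf.map_one) (hf.exists_adj_succ_eq hS h1 1) y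
    exact w.reverse.reachable
  exact (SimpleGraph.connected_iff _).2 ⟨fun x y => (hreach x).symm.trans (hreach y), ⟨1⟩⟩

end IsDistFromOne

variable [DecidableEq G] {S : Finset G}

theorem ncard_cayleyGraph_adj_and (hS : ∀ s ∈ S, s⁻¹ ∈ S) (h1 : 1 ∉ S) (y : G) (P : G → Prop)
    [DecidablePred P] :
    {z | (cayleyGraph (S : Set G)).Adj y z ∧ P z}.ncard = {s ∈ S | P (s * y)}.card := by
  have himage : {z | (cayleyGraph (S : Set G)).Adj y z ∧ P z} =
      ↑({s ∈ S | P (s * y)}.image (· * y)) := by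
    ext z
    simp only [cayleyGraph_adj_iff hS h1, Finset.mem_coe, Set.mem_ofPred_eq, Finset.coe_image,
      Finset.coe_filter, Set.mem_image]
    constructor
    · rintro ⟨⟨s, hs, rfl⟩, hP⟩
      exact ⟨s, ⟨hs, hP⟩, rfl⟩
    · rintro ⟨s, ⟨hs, hP⟩, rfl⟩
      exact ⟨⟨s, hs, rfl⟩, hP⟩
  rw [himage, Set.ncard_coe_finset, Finset.card_image_of_injective _ (mul_left_injective y)]

/-- A Cayley graph is vertex-transitive, so its intersection numbers can be counted at `1`. -/
theorem isDRGWith_cayleyGraph (hS : ∀ s ∈ S, s⁻¹ ∈ S) (h1 : 1 ∉ S) {f : G → ℕ}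
    (hf : IsDistFromOne (S : Set G) f) {b c : List ℕ} (hlen : c.length = b.length)
    (hle : ∀ g, f g ≤ b.length) (hdiam : ∃ g, f g = b.length)
    (hb : ∀ g, f g < b.length → {s ∈ S | f (s * g) = f g + 1}.card = b.getD (f g) 0)
    (hc : ∀ g, 1 ≤ f g → {s ∈ S | f (s * g) = f g - 1}.card = c.getD (f g - 1) 0) :
    (cayleyGraph (S : Set G)).IsDRGWith b c := by
  have hdist := hf.dist_eq hS h1
  refine ⟨hf.connected hS h1, hlen, fun x y => hdist x y ▸ hle _, ?_, fun i x y hi => ?_⟩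
  · obtain ⟨g, hg⟩ := hdiam
    exact ⟨1, g, by rw [hdist, inv_one, mul_one, hg]⟩
  have hcount (j : ℕ) : {z | (cayleyGraph (S : Set G)).Adj y z ∧
      (cayleyGraph (S : Set G)).dist x z = j}.ncard = {s ∈ S | f (s * (y * x⁻¹)) = j}.card := by
    simp only [hdist x, ncard_cayleyGraph_adj_and hS h1, mul_assoc]
  rw [hdist] at hi
  subst hi
  exact ⟨fun h => (hcount _).trans (hb _ h), fun h => (hcount _).trans (hc _ h)⟩

end Cayley

@[ext]
structure BilinExtension {V A : Type*} [AddCommGroup V] [AddCommGroup A] (β : V →+ V →+ A) where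
  fst : V
  snd : A

namespace BilinExtension

variable {V A : Type*} [AddCommGroup V] [AddCommGroup A] (β : V →+ V →+ A)

instance : Mul (BilinExtension β) := ⟨fun p q => ⟨p.fst + q.fst, p.snd + q.snd + β p.fst q.fst⟩⟩
instance : One (BilinExtension β) := ⟨⟨0, 0⟩⟩
instance : Inv (BilinExtension β) := ⟨fun p => ⟨-p.fst, -p.snd + β p.fst p.fst⟩⟩

variable {β}

@[simp] theorem mul_fst (p q : BilinExtension β) : (p * q).fst = p.fst + q.fst := rfl
@[simp] theorem mul_snd (p q : BilinExtension β) :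
    (p * q).snd = p.snd + q.snd + β p.fst q.fst := rfl
@[simp] theorem one_fst : (1 : BilinExtension β).fst = 0 := rfl
@[simp] theorem one_snd : (1 : BilinExtension β).snd = 0 := rfl
@[simp] theorem inv_fst (p : BilinExtension β) : p⁻¹.fst = -p.fst := rfl
@[simp] theorem inv_snd (p : BilinExtension β) : p⁻¹.snd = -p.snd + β p.fst p.fst := rfl

variable (β)

instance : Group (BilinExtension β) :=
  Group.ofLeftAxioms
    (fun p q r => by ext <;> simp only [mul_fst, mul_snd, map_add, AddMonoidHom.add_apply] <;> abel)
    (fun p => by ext <;> simp)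
    (fun p => by ext <;> simp)

def equivProd : BilinExtension β ≃ V × A where
  toFun p := (p.fst, p.snd)
  invFun q := ⟨q.1, q.2⟩

instance [DecidableEq V] [DecidableEq A] : DecidableEq (BilinExtension β) := fun p q =>
  decidable_of_iff (p.fst = q.fst ∧ p.snd = q.snd) BilinExtension.ext_iff.symm

instance [Fintype V] [Fintype A] : Fintype (BilinExtension β) :=
  Fintype.ofEquiv _ (equivProd β).symm

end BilinExtension

section ArmaniosWells

/-- The commutator form `β a b - β b a` is `1` on every pair of distinct basis vectors, so the
generators `awGen i` pairwise commute up to `awCentre`. -/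
def awCocycle : (Fin 4 → ZMod 2) →+ (Fin 4 → ZMod 2) →+ ZMod 2 :=
  LinearMap.toAddMonoidHom'.comp <| LinearMap.toAddMonoidHom <|
    Matrix.toLinearMap₂' (ZMod 2) (Matrix.of fun i j : Fin 4 => if i < j then 1 else 0)

abbrev AWGroup : Type := BilinExtension awCocycle

def awGen (i : Fin 4) : AWGroup := ⟨Pi.single i 1, 0⟩

def awCentre : AWGroup := ⟨0, 1⟩

def awConnectionSet : Finset AWGroup :=
  {awGen 0, awGen 1, awGen 2, awGen 3, awGen 0 * awGen 1 * awGen 2 * awGen 3}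

def awDist (g : AWGroup) : ℕ :=
  if g = 1 then 0
  else if g ∈ awConnectionSet then 1
  else if g = awCentre then 4
  else if awCentre * g ∈ awConnectionSet then 3
  else 2

theorem card_awGroup : Fintype.card AWGroup = 32 := by
  simp [Fintype.card_congr (BilinExtension.equivProd awCocycle)]

theorem isDistFromOne_awDist : IsDistFromOne (awConnectionSet : Set AWGroup) awDist :=
  ⟨rfl, by decide, by decide⟩

end ArmaniosWells

/-- There exist a finite group `G` of order `32` and an inverse-closed subset `S ⊆ G` with
`1 ∉ S` and `|S| = 5` such that `Cay(G, S)` is distance-regular with intersection array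
`{5,4,1,1; 1,1,4,5}`; that is, the Armanios-Wells graph is a Cayley graph. -/
theorem stmt_18 :
    ∃ (G : Type) (instG : Group G) (instF : Fintype G) (S : Set G),
      @IsArmaniosWellsConnectionSet G instG instF S := by
  have hS : ∀ s ∈ awConnectionSet, s⁻¹ ∈ awConnectionSet := by decide
  have h1 : (1 : AWGroup) ∉ awConnectionSet := by decide
  refine ⟨AWGroup, inferInstance, inferInstance, awConnectionSet, card_awGroup, hS, h1,
    by rw [Set.ncard_coe_finset]; rfl, ?_⟩
  exact isDRGWith_cayleyGraph hS h1 isDistFromOne_awDist rfl (by decide) ⟨awCentre, rfl⟩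
    (by decide) (by decide)
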